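/- Let (α₀, α₁, α₂, α₃) be a rotation quadrangle with relative revolute axes r_{i,i+1}. Let ℓ be a line such that for each i (indices modulo 4) the homologous images α_i(ℓ) and α_{i+1}(ℓ) have a common point, and such that the direction of ℓ is not orthogonal to the direction of r_{i,i+1}. Then ℓ intersects each of the four axes r₀₁, r₁₂, r₂₃, r₃₀; that is, ℓ is a common transversal of the four relative revolute axes. -/

import Mathlib

noncomputable section

abbrev E : Type := EuclideanSpace ℝ (Fin 3)

/-- A line: a one-dimensional affine subspace. -/
def IsLine (s : AffineSubspace ℝ E) : Prop := Module.finrank ℝ s.direction = 1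

/-- A plane: a two-dimensional affine subspace. -/
def IsPlane (s : AffineSubspace ℝ E) : Prop := Module.finrank ℝ s.direction = 2

/-- A set of points lies on a circle or a line: it is concyclic (contained in the
intersection of a sphere and a plane) or collinear. -/
def ConcyclicOrCollinear (s : Set E) : Prop :=
  EuclideanGeometry.Concyclic s ∨ Collinear ℝ s

/-- `τ` is a rotation with axis `r`: an isometry different from the identity whose
linear part has determinant 1 and which fixes every point of the line `r`. -/
def IsRotation (τ : E ≃ᵃⁱ[ℝ] E) (r : AffineSubspace ℝ E) : Prop :=
  τ ≠ AffineIsometryEquiv.refl ℝ E ∧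
  LinearMap.det (τ.linearIsometryEquiv.toLinearEquiv : E →ₗ[ℝ] E) = 1 ∧
  IsLine r ∧ ∀ x ∈ r, τ x = x

/-- `(α 0, α 1, α 2, α 3)` is a rotation quadrangle with relative revolute axes
`r i` (in the moving space): each relative displacement `τ_{i,i+1} = α (i+1) ∘ (α i)⁻¹`
is a rotation whose axis is the image `α i (r i)`. -/
def IsRotationQuadrangle (α : Fin 4 → (E ≃ᵃⁱ[ℝ] E)) (r : Fin 4 → AffineSubspace ℝ E) : Prop :=
  ∀ i : Fin 4,
    IsRotation ((α i).symm.trans (α (i + 1)))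
      ((r i).map (α i).toAffineIsometry.toAffineMap)

open scoped RealInnerProductSpace

/-!
Fix `i`, write `β = α i`, `γ = α (i + 1)` and let `τ = γ ∘ β⁻¹`, a rotation about `a = β(r i)`.
A common point of `β(ℓ)` and `γ(ℓ)` is `β Y = γ Z` with `Y, Z ∈ ℓ`, so the line `β(ℓ)` contains
both `β Z` and its image `τ (β Z)`. A rotation moves every point orthogonally to its axis, and
`β(ℓ)` is not orthogonal to `a`, hence `τ` fixes `β Z`. A proper isometry of space fixing a line
and a point off it fixes a plane and is the identity (Cartan–Dieudonné), so `β Z ∈ a`, i.e.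
`Z ∈ ℓ ∩ r i`.
-/

open Module

section
variable {F : Type*} [NormedAddCommGroup F] [InnerProductSpace ℝ F] [FiniteDimensional ℝ F]

theorem LinearIsometryEquiv.eq_refl_of_det_eq_one_of_fixes (φ : F ≃ₗᵢ[ℝ] F)
    (hdet : LinearMap.det (φ.toLinearEquiv : F →ₗ[ℝ] F) = 1) {K : Submodule ℝ F}
    (hK : ∀ x ∈ K, φ x = x) (hKdim : finrank ℝ Kᗮ ≤ 1) :
    φ = LinearIsometryEquiv.refl ℝ F := by
  have hfixed : K ≤ (ContinuousLinearMap.id ℝ F - φ).ker := fun x hx => by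
    simp [hK x hx]
  -- `φ` is a product of at most one hyperplane reflection, and those have determinant `-1`.
  obtain ⟨l, hl, rfl⟩ := φ.reflections_generate_dim_aux
    ((Submodule.finrank_mono (Submodule.orthogonal_le hfixed)).trans hKdim)
  match l, hl with
  | [], _ => rfl
  | [v], _ =>
    rcases eq_or_ne v 0 with rfl | hv
    · ext x
      simp [Submodule.reflection_eq_self_iff]
    · have hdet_refl := Submodule.det_reflection (ℝ ∙ v)ᗮ
      rw [Submodule.orthogonal_orthogonal, finrank_span_singleton hv] at hdet_refl
      simp only [List.map_cons, List.map_nil, List.prod_cons, List.prod_nil, mul_one] at hdet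
      norm_num [hdet] at hdet_refl

end

section
variable {V P : Type*} [NormedAddCommGroup V] [InnerProductSpace ℝ V] [MetricSpace P]
  [NormedAddTorsor V P]

theorem Submodule.eq_zero_of_inner_eq_zero_of_finrank_eq_one {K : Submodule ℝ V}
    (hK : finrank ℝ K = 1) {u v w : V} (hu : u ∈ K) (hv : v ∈ K) (hvw : ⟪v, w⟫ ≠ 0)
    (huw : ⟪u, w⟫ = 0) : u = 0 := by
  have hv0 : v ≠ 0 := by rintro rfl; simp at hvw
  rw [eq_span_singleton_of_mem_of_finrank_eq_one hK hv hv0, Submodule.mem_span_singleton] at hu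
  obtain ⟨c, rfl⟩ := hu
  rw [real_inner_smul_left, mul_eq_zero] at huw
  simp [huw.resolve_right hvw]

theorem AffineIsometryEquiv.linearIsometryEquiv_apply_of_mem_direction (τ : P ≃ᵃⁱ[ℝ] P)
    {s : AffineSubspace ℝ P} (hfix : ∀ x ∈ s, τ x = x) {w : V} (hw : w ∈ s.direction) :
    τ.linearIsometryEquiv w = w := by
  suffices s.direction ≤ LinearMap.eqLocus (τ.linearIsometryEquiv : V →ₗ[ℝ] V) LinearMap.id from
    this hw
  rw [AffineSubspace.direction, vectorSpan_def, Submodule.span_le]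
  rintro _ ⟨x, hx, y, hy, rfl⟩
  simp [hfix x hx, hfix y hy]

theorem AffineIsometryEquiv.inner_apply_vsub_self_eq_zero (τ : P ≃ᵃⁱ[ℝ] P) {p : P}
    (hp : τ p = p) {w : V} (hw : τ.linearIsometryEquiv w = w) (x : P) :
    ⟪τ x -ᵥ x, w⟫ = 0 := by
  have hx : ⟪τ x -ᵥ p, w⟫ = ⟪x -ᵥ p, w⟫ := by
    conv_lhs => rw [← hp, ← τ.map_vsub, ← hw]
    exact τ.linearIsometryEquiv.inner_map_map _ _
  rw [← vsub_sub_vsub_cancel_right (τ x) x p, inner_sub_left, hx, sub_self]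

theorem AffineIsometryEquiv.linearIsometryEquiv_mem_direction_map (β : P ≃ᵃⁱ[ℝ] P)
    {s : AffineSubspace ℝ P} {v : V} (hv : v ∈ s.direction) :
    β.linearIsometryEquiv v ∈ (s.map β.toAffineIsometry.toAffineMap).direction := by
  rw [AffineSubspace.map_direction]
  exact Submodule.mem_map_of_mem hv

end

theorem IsLine.direction_ne_bot {s : AffineSubspace ℝ E} (h : IsLine s) : s.direction ≠ ⊥ :=
  fun hs => by rw [IsLine, hs, finrank_bot] at h; exact zero_ne_one h

theorem IsLine.nonempty {s : AffineSubspace ℝ E} (h : IsLine s) : (s : Set E).Nonempty := by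
  rw [AffineSubspace.nonempty_iff_ne_bot]
  rintro rfl
  exact h.direction_ne_bot (AffineSubspace.direction_bot ℝ E E)

theorem IsLine.map {s : AffineSubspace ℝ E} (h : IsLine s) (β : E ≃ᵃⁱ[ℝ] E) :
    IsLine (s.map β.toAffineIsometry.toAffineMap) := by
  rw [IsLine, AffineSubspace.map_direction]
  exact (LinearEquiv.finrank_map_eq β.linearIsometryEquiv.toLinearEquiv _).trans h

theorem IsRotation.mem_of_apply_eq {τ : E ≃ᵃⁱ[ℝ] E} {a : AffineSubspace ℝ E}
    (h : IsRotation τ a) {X : E} (hX : τ X = X) : X ∈ a := by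
  obtain ⟨hne, hdet, ha, hfix⟩ := h
  obtain ⟨p, hp⟩ := ha.nonempty
  obtain ⟨w, hw, hw0⟩ := Submodule.exists_mem_ne_zero_of_ne_bot ha.direction_ne_bot
  by_contra hXa
  have hind : LinearIndependent ℝ ![X -ᵥ p, w] := by
    rw [linearIndependent_fin2]
    refine ⟨by simpa using hw0, fun c hc => hXa ?_⟩
    simp only [Matrix.cons_val_one, Matrix.cons_val_zero] at hc
    rw [← AffineSubspace.vsub_right_mem_direction_iff_mem hp, ← hc]
    exact a.direction.smul_mem c hw
  set K := Submodule.span ℝ (Set.range ![X -ᵥ p, w])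
  have hK : ∀ x ∈ K, τ.linearIsometryEquiv x = x := by
    suffices K ≤ LinearMap.eqLocus (τ.linearIsometryEquiv : E →ₗ[ℝ] E) LinearMap.id from
      fun x hx => this hx
    rw [Submodule.span_le, Set.range_subset_iff]
    intro j
    fin_cases j
    · show τ.linearIsometryEquiv (X -ᵥ p) = X -ᵥ p
      rw [τ.map_vsub, hX, hfix p hp]
    · exact τ.linearIsometryEquiv_apply_of_mem_direction hfix hw
  have hKdim : finrank ℝ Kᗮ ≤ 1 := by
    have := K.finrank_add_finrank_orthogonal
    rw [finrank_span_eq_card hind, Fintype.card_fin, finrank_euclideanSpace_fin] at this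
    omega
  have hT := τ.linearIsometryEquiv.eq_refl_of_det_eq_one_of_fixes hdet hK hKdim
  refine hne (AffineIsometryEquiv.ext fun x => ?_)
  rw [AffineIsometryEquiv.coe_refl, id, ← vsub_vadd x p, τ.map_vadd, hfix p hp, hT]
  rfl

theorem IsRotation.mem_of_mem_of_apply_mem {τ : E ≃ᵃⁱ[ℝ] E} {a : AffineSubspace ℝ E}
    (h : IsRotation τ a) {L : AffineSubspace ℝ E} (hL : IsLine L) {v w : E}
    (hv : v ∈ L.direction) (hw : w ∈ a.direction) (hvw : ⟪v, w⟫ ≠ 0) {Y : E} (hY : Y ∈ L)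
    (hτY : τ Y ∈ L) : Y ∈ a := by
  have ⟨_, _, ha, hfix⟩ := h
  obtain ⟨p, hp⟩ := ha.nonempty
  have hmove : ⟪τ Y -ᵥ Y, w⟫ = 0 := τ.inner_apply_vsub_self_eq_zero (hfix p hp)
    (τ.linearIsometryEquiv_apply_of_mem_direction hfix hw) Y
  have hτY_eq : τ Y -ᵥ Y = 0 := Submodule.eq_zero_of_inner_eq_zero_of_finrank_eq_one hL
    (L.vsub_mem_direction hτY hY) hv hvw hmove
  exact h.mem_of_apply_eq (vsub_eq_zero_iff_eq.1 hτY_eq)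

/-- In a rotation quadrangle, if for each `i` the consecutive homologous
images `α i (ℓ)` and `α (i+1) (ℓ)` of a line `ℓ` have a common point, and the direction
of `ℓ` is not orthogonal to the direction of the axis `r i`, then `ℓ` intersects each of
the four relative revolute axes, i.e. `ℓ` is a common transversal of the axes. -/
theorem line_is_common_transversal
    (α : Fin 4 → (E ≃ᵃⁱ[ℝ] E)) (r : Fin 4 → AffineSubspace ℝ E)
    (hquad : IsRotationQuadrangle α r)
    (ℓ : AffineSubspace ℝ E) (hℓ : IsLine ℓ)
    (hmeet : ∀ i : Fin 4, ∃ X : E,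
      X ∈ ℓ.map (α i).toAffineIsometry.toAffineMap ∧
      X ∈ ℓ.map (α (i + 1)).toAffineIsometry.toAffineMap)
    (hnotperp : ∀ i : Fin 4,
      ¬ (∀ v ∈ ℓ.direction, ∀ w ∈ (r i).direction, ⟪v, w⟫ = 0)) :
    ∀ i : Fin 4, ∃ X : E, X ∈ ℓ ∧ X ∈ r i := by
  intro i
  obtain ⟨v, hv, w, hw, hvw⟩ : ∃ v ∈ ℓ.direction, ∃ w ∈ (r i).direction, ⟪v, w⟫ ≠ 0 := by
    simpa using hnotperp i
  obtain ⟨X, hXi, hXsucc⟩ := hmeet i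
  obtain ⟨Y, hY, rfl⟩ := AffineSubspace.mem_map.1 hXi
  obtain ⟨Z, hZ, hZY⟩ := AffineSubspace.mem_map.1 hXsucc
  have hτ : ((α i).symm.trans (α (i + 1))) (α i Z) = α i Y := by
    simpa using hZY
  have hZ_axis := (hquad i).mem_of_mem_of_apply_mem (hℓ.map (α i))
    ((α i).linearIsometryEquiv_mem_direction_map hv)
    ((α i).linearIsometryEquiv_mem_direction_map hw)
    (by rwa [LinearIsometryEquiv.inner_map_map])
    (AffineSubspace.mem_map_of_mem _ hZ) (hτ ▸ AffineSubspace.mem_map_of_mem _ hY)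
  exact ⟨Z, hZ, (AffineSubspace.mem_map_iff_mem_of_injective (α i).injective).1 hZ_axis⟩
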